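/- arXiv:2510.02119 — 5 statements merged into one kernel-verified Lean document; each statement's English description precedes it below -/
import Mathlib

section
/- Let A, B be symmetric d×d real matrices and f : ℝ → ℝ be L-Lipschitz on an interval containing the union of the spectra of A and B. Then ‖f(A) − f(B)‖_F ≤ L·‖A − B‖_F, where f(M) is defined via the spectral calculus (applying f to eigenvalues). -/
/-- Frobenius norm of a real matrix. -/
noncomputable def frobNorm {d n : ℕ} (A : Matrix (Fin d) (Fin n) ℝ) : ℝ :=
  Real.sqrt (∑ i, ∑ j, (A i j) ^ 2)

/-- Spectral calculus: apply `f : ℝ → ℝ` to the eigenvalues of a Hermitian (symmetric)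
real matrix. -/
noncomputable def matApply {d : ℕ} (f : ℝ → ℝ) {A : Matrix (Fin d) (Fin d) ℝ}
    (hA : A.IsHermitian) : Matrix (Fin d) (Fin d) ℝ :=
  (hA.eigenvectorUnitary : Matrix (Fin d) (Fin d) ℝ) *
    Matrix.diagonal (fun i => f (hA.eigenvalues i)) *
    (star (hA.eigenvectorUnitary : Matrix (Fin d) (Fin d) ℝ))

private lemma sqsum_eq_trace {d : ℕ} (N : Matrix (Fin d) (Fin d) ℝ) :
    ∑ i, ∑ j, (N i j) ^ 2 = Matrix.trace (star N * N) := by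
  simp only [Matrix.trace, Matrix.diag, Matrix.mul_apply, Matrix.star_apply,
    Matrix.star_eq_conjTranspose, Matrix.conjTranspose_apply, star_trivial, sq]
  rw [Finset.sum_comm]

private lemma sqsum_conj {d : ℕ} (U V M : Matrix (Fin d) (Fin d) ℝ)
    (hU : U * star U = 1) (hV : V * star V = 1) :
    ∑ i, ∑ j, ((star U * M * V) i j) ^ 2 = ∑ i, ∑ j, (M i j) ^ 2 := by
  rw [sqsum_eq_trace, sqsum_eq_trace]
  have h1 : star (star U * M * V) * (star U * M * V)
      = star V * (star M * M) * V := by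
    have hs : star (star U * M * V) = star V * star M * U := by
      simp [star_mul, mul_assoc]
    rw [hs]
    calc star V * star M * U * (star U * M * V)
        = star V * star M * (U * star U) * (M * V) := by noncomm_ring
      _ = star V * (star M * M) * V := by rw [hU]; noncomm_ring
  rw [h1, Matrix.trace_mul_cycle, ← mul_assoc, hV, one_mul]

/-- If `f` is `L`-Lipschitz on an interval containing the spectra of the symmetric matrices
`A` and `B`, then `‖f(A) − f(B)‖_F ≤ L‖A − B‖_F`. -/
theorem lipschitz_spectral_transform {d : ℕ} (A B : Matrix (Fin d) (Fin d) ℝ)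
    (hA : A.IsHermitian) (hB : B.IsHermitian) (f : ℝ → ℝ) (L a b : ℝ) (hL : 0 ≤ L)
    (hspecA : ∀ i, hA.eigenvalues i ∈ Set.Icc a b)
    (hspecB : ∀ i, hB.eigenvalues i ∈ Set.Icc a b)
    (hf : ∀ x ∈ Set.Icc a b, ∀ y ∈ Set.Icc a b, |f x - f y| ≤ L * |x - y|) :
    frobNorm (matApply f hA - matApply f hB) ≤ L * frobNorm (A - B) := by
  set U : Matrix (Fin d) (Fin d) ℝ := (hA.eigenvectorUnitary : Matrix (Fin d) (Fin d) ℝ)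
  set V : Matrix (Fin d) (Fin d) ℝ := (hB.eigenvectorUnitary : Matrix (Fin d) (Fin d) ℝ)
  have hU : U * star U = 1 := (Matrix.mem_unitaryGroup_iff).mp hA.eigenvectorUnitary.2
  have hU' : star U * U = 1 := (Matrix.mem_unitaryGroup_iff').mp hA.eigenvectorUnitary.2
  have hV : V * star V = 1 := (Matrix.mem_unitaryGroup_iff).mp hB.eigenvectorUnitary.2
  have hV' : star V * V = 1 := (Matrix.mem_unitaryGroup_iff').mp hB.eigenvectorUnitary.2
  set W : Matrix (Fin d) (Fin d) ℝ := star U * V with hW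
  -- entries of the conjugated difference matrices
  have hconj : ∀ (g : ℝ → ℝ),
      star U * (U * Matrix.diagonal (fun i => g (hA.eigenvalues i)) * star U
        - V * Matrix.diagonal (fun i => g (hB.eigenvalues i)) * star V) * V
      = Matrix.of (fun i j => (g (hA.eigenvalues i) - g (hB.eigenvalues j)) * W i j) := by
    intro g
    have h1 : star U * (U * Matrix.diagonal (fun i => g (hA.eigenvalues i)) * star U) * V
        = Matrix.diagonal (fun i => g (hA.eigenvalues i)) * W := by
      rw [hW]
      calc star U * (U * Matrix.diagonal (fun i => g (hA.eigenvalues i)) * star U) * V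
          = (star U * U) * Matrix.diagonal (fun i => g (hA.eigenvalues i)) * (star U * V) := by
            noncomm_ring
        _ = Matrix.diagonal (fun i => g (hA.eigenvalues i)) * (star U * V) := by
            rw [hU', one_mul]
    have h2 : star U * (V * Matrix.diagonal (fun i => g (hB.eigenvalues i)) * star V) * V
        = W * Matrix.diagonal (fun i => g (hB.eigenvalues i)) := by
      rw [hW]
      calc star U * (V * Matrix.diagonal (fun i => g (hB.eigenvalues i)) * star V) * V
          = (star U * V) * Matrix.diagonal (fun i => g (hB.eigenvalues i)) * (star V * V) := by
            noncomm_ring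
        _ = (star U * V) * Matrix.diagonal (fun i => g (hB.eigenvalues i)) := by
            rw [hV', mul_one]
    rw [Matrix.mul_sub, Matrix.sub_mul, h1, h2]
    ext i j
    simp [Matrix.diagonal_mul, Matrix.mul_diagonal, sub_mul, mul_comm]
  -- spectral theorem for A and B
  have hAspec : A = U * Matrix.diagonal (fun i => hA.eigenvalues i) * star U := by
    have := hA.spectral_theorem
    simpa [RCLike.ofReal_real_eq_id, Function.comp] using this
  have hBspec : B = V * Matrix.diagonal (fun i => hB.eigenvalues i) * star V := by
    have := hB.spectral_theorem
    simpa [RCLike.ofReal_real_eq_id, Function.comp] using this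
  have hAB : star U * (A - B) * V
      = Matrix.of (fun i j => (hA.eigenvalues i - hB.eigenvalues j) * W i j) := by
    have h0 := hconj (fun x => x)
    rw [← hAspec, ← hBspec] at h0
    exact h0
  have hfAB : star U * (matApply f hA - matApply f hB) * V
      = Matrix.of (fun i j => (f (hA.eigenvalues i) - f (hB.eigenvalues j)) * W i j) := by
    exact hconj f
  -- sum of squares comparison
  have hsum1 : ∑ i, ∑ j, ((matApply f hA - matApply f hB) i j) ^ 2
      = ∑ i, ∑ j, ((f (hA.eigenvalues i) - f (hB.eigenvalues j)) * W i j) ^ 2 := by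
    rw [← sqsum_conj U V _ hU hV, hfAB]
    simp [Matrix.of_apply]
  have hsum2 : ∑ i, ∑ j, ((A - B) i j) ^ 2
      = ∑ i, ∑ j, ((hA.eigenvalues i - hB.eigenvalues j) * W i j) ^ 2 := by
    rw [← sqsum_conj U V _ hU hV, hAB]
    simp [Matrix.of_apply]
  have hle : ∑ i, ∑ j, ((f (hA.eigenvalues i) - f (hB.eigenvalues j)) * W i j) ^ 2
      ≤ L ^ 2 * ∑ i, ∑ j, ((hA.eigenvalues i - hB.eigenvalues j) * W i j) ^ 2 := by
    rw [Finset.mul_sum]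
    refine Finset.sum_le_sum fun i _ => ?_
    rw [Finset.mul_sum]
    refine Finset.sum_le_sum fun j _ => ?_
    have h := hf _ (hspecA i) _ (hspecB j)
    have h2 : (f (hA.eigenvalues i) - f (hB.eigenvalues j)) ^ 2
        ≤ L ^ 2 * (hA.eigenvalues i - hB.eigenvalues j) ^ 2 := by
      calc (f (hA.eigenvalues i) - f (hB.eigenvalues j)) ^ 2
          = |f (hA.eigenvalues i) - f (hB.eigenvalues j)| ^ 2 := (sq_abs _).symm
        _ ≤ (L * |hA.eigenvalues i - hB.eigenvalues j|) ^ 2 :=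
            pow_le_pow_left₀ (abs_nonneg _) h 2
        _ = L ^ 2 * (hA.eigenvalues i - hB.eigenvalues j) ^ 2 := by
            rw [mul_pow, sq_abs]
    calc ((f (hA.eigenvalues i) - f (hB.eigenvalues j)) * W i j) ^ 2
        = (f (hA.eigenvalues i) - f (hB.eigenvalues j)) ^ 2 * (W i j) ^ 2 := by ring
      _ ≤ L ^ 2 * (hA.eigenvalues i - hB.eigenvalues j) ^ 2 * (W i j) ^ 2 := by
          apply mul_le_mul_of_nonneg_right h2 (sq_nonneg _)
      _ = L ^ 2 * ((hA.eigenvalues i - hB.eigenvalues j) * W i j) ^ 2 := by ring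
  -- conclude
  unfold frobNorm
  rw [hsum1, hsum2]
  have : L * Real.sqrt (∑ i, ∑ j, ((hA.eigenvalues i - hB.eigenvalues j) * W i j) ^ 2)
      = Real.sqrt (L ^ 2 * ∑ i, ∑ j, ((hA.eigenvalues i - hB.eigenvalues j) * W i j) ^ 2) := by
    rw [Real.sqrt_mul (sq_nonneg L), Real.sqrt_sq hL]
  rw [this]
  exact Real.sqrt_le_sqrt hle
end

section
/- Let X₁, X₂ ∈ ℝ^{d×n} and D a positive semidefinite d×d matrix. Write C_X = (1/n) X Xᵀ. If the smallest eigenvalue of C_{X_i} + D is at least ε > 0 for i = 1,2, then ‖(C_{X₁} + D)^{−1} − (C_{X₂} + D)^{−1}‖_F ≤ (2 / √(n ε³)) · ‖X₁ − X₂‖_F. -/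
/-!
Write `Aᵢ = n⁻¹ XᵢXᵢᵀ + D` and `E = X₂ - X₁`. The resolvent identity together with
`X₂X₂ᵀ - X₁X₁ᵀ = X₁Eᵀ + EX₂ᵀ` gives
`A₁⁻¹ - A₂⁻¹ = n⁻¹ (A₁⁻¹X₁ · Eᵀ · A₂⁻¹ + A₁⁻¹ · E · X₂ᵀA₂⁻¹)`.
The Frobenius norm of a product `P E Q` is at most `‖P‖_op ‖Q‖_op ‖E‖_F`. Since `Aᵢ ⪰ ε`, we have
`‖Aᵢ⁻¹‖_op ≤ ε⁻¹`, and since `XᵢXᵢᵀ ⪯ n Aᵢ`, we have `‖Aᵢ⁻¹Xᵢ‖_op² ≤ n / ε`; so each of the two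
terms is at most `√(n / ε³) ‖E‖_F`.
-/

open Matrix
section QuadraticForm

variable {m k : Type*}

lemma posDef_of_posSemidef_sub_smul_one [DecidableEq m] {A : Matrix m m ℝ} {ε : ℝ} (hε : 0 < ε)
    (h : (A - ε • 1).PosSemidef) : A.PosDef := by
  simpa using PosDef.posSemidef_add h (PosDef.one.smul hε)

variable [Fintype m] [Fintype k]

lemma dotProduct_self_nonneg (v : m → ℝ) : 0 ≤ v ⬝ᵥ v :=
  dotProduct_star_self_nonneg v

lemma dotProduct_sq_le (v w : m → ℝ) : (v ⬝ᵥ w) ^ 2 ≤ (v ⬝ᵥ v) * (w ⬝ᵥ w) := by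
  simpa only [dotProduct, sq] using Finset.sum_mul_sq_le_sq_mul_sq Finset.univ v w

lemma dotProduct_mulVec_le_of_posSemidef_sub {P Q : Matrix m m ℝ} (h : (P - Q).PosSemidef)
    (x : m → ℝ) : x ⬝ᵥ (Q *ᵥ x) ≤ x ⬝ᵥ (P *ᵥ x) := by
  have := h.dotProduct_mulVec_nonneg x
  rw [star_trivial, sub_mulVec, dotProduct_sub] at this
  linarith

variable [DecidableEq m] {A : Matrix m m ℝ} {ε : ℝ}

lemma dotProduct_inv_mul_mulVec_le {B : Matrix m k ℝ} {c : ℝ} (hε : 0 < ε) (hc : 0 ≤ c)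
    (hA : (A - ε • 1).PosSemidef) (hB : (c • A - B * Bᵀ).PosSemidef) (v : k → ℝ) :
    ((A⁻¹ * B) *ᵥ v) ⬝ᵥ ((A⁻¹ * B) *ᵥ v) ≤ c / ε * (v ⬝ᵥ v) := by
  set w := (A⁻¹ * B) *ᵥ v
  have hAw : A *ᵥ w = B *ᵥ v := by
    rw [mulVec_mulVec, ← Matrix.mul_assoc, mul_nonsing_inv _
      ((posDef_of_posSemidef_sub_smul_one hε hA).isUnit.map detMonoidHom), Matrix.one_mul]
  have hq : w ⬝ᵥ (A *ᵥ w) = (Bᵀ *ᵥ w) ⬝ᵥ v := by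
    rw [hAw, dotProduct_mulVec, ← mulVec_transpose]
  -- `q = ⟨w, A w⟩` is squeezed between `ε ‖w‖²` and, by Cauchy–Schwarz, `c ‖v‖²`
  set q := w ⬝ᵥ (A *ᵥ w)
  have hεq : ε * (w ⬝ᵥ w) ≤ q := by
    simpa [smul_mulVec, dotProduct_smul] using dotProduct_mulVec_le_of_posSemidef_sub hA w
  have hBq : (Bᵀ *ᵥ w) ⬝ᵥ (Bᵀ *ᵥ w) ≤ c * q := by
    have := dotProduct_mulVec_le_of_posSemidef_sub hB w
    rwa [← mulVec_mulVec, dotProduct_mulVec, ← mulVec_transpose, smul_mulVec, dotProduct_smul,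
      smul_eq_mul] at this
  have hq_nonneg : 0 ≤ q := (mul_nonneg hε.le (dotProduct_self_nonneg w)).trans hεq
  have hqv : q ≤ c * (v ⬝ᵥ v) := by
    have hsq : q ^ 2 ≤ c * q * (v ⬝ᵥ v) := by
      calc q ^ 2 ≤ ((Bᵀ *ᵥ w) ⬝ᵥ (Bᵀ *ᵥ w)) * (v ⬝ᵥ v) := hq ▸ dotProduct_sq_le _ _
        _ ≤ c * q * (v ⬝ᵥ v) := by gcongr; exact dotProduct_self_nonneg v
    rcases hq_nonneg.eq_or_lt with h0 | hpos
    · rw [← h0]; exact mul_nonneg hc (dotProduct_self_nonneg v)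
    · nlinarith
  rw [div_mul_eq_mul_div, le_div_iff₀ hε]
  linarith

lemma dotProduct_inv_mulVec_le (hε : 0 < ε) (hA : (A - ε • 1).PosSemidef) (v : m → ℝ) :
    (A⁻¹ *ᵥ v) ⬝ᵥ (A⁻¹ *ᵥ v) ≤ ε⁻¹ / ε * (v ⬝ᵥ v) := by
  have h1 : (ε⁻¹ • A - 1 * 1ᵀ).PosSemidef := by
    rw [transpose_one, Matrix.one_mul, ← inv_smul_smul₀ hε.ne' (1 : Matrix m m ℝ), ← smul_sub]
    exact hA.smul (inv_nonneg.mpr hε.le)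
  simpa using dotProduct_inv_mul_mulVec_le hε (inv_nonneg.mpr hε.le) hA h1 v

lemma transpose_inv_of_posSemidef_sub_smul_one (hε : 0 < ε) (hA : (A - ε • 1).PosSemidef) :
    A⁻¹ᵀ = A⁻¹ := by
  simpa only [conjTranspose_eq_transpose_of_trivial] using
    (posDef_of_posSemidef_sub_smul_one hε hA).inv.isHermitian.eq

end QuadraticForm

section Frobenius

variable {p q d k : ℕ}

section Norm

attribute [local instance] Matrix.frobeniusNormedAddCommGroup Matrix.frobeniusNormedSpace

lemma frobNorm_eq_norm (A : Matrix (Fin d) (Fin k) ℝ) : frobNorm A = ‖A‖ := by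
  simp only [frobNorm, frobenius_norm_def, Real.norm_eq_abs, Real.sqrt_eq_rpow, Real.rpow_two,
    sq_abs]

lemma frobNorm_add_le (A B : Matrix (Fin d) (Fin k) ℝ) :
    frobNorm (A + B) ≤ frobNorm A + frobNorm B := by
  simpa only [frobNorm_eq_norm] using norm_add_le A B

lemma frobNorm_smul (r : ℝ) (A : Matrix (Fin d) (Fin k) ℝ) :
    frobNorm (r • A) = |r| * frobNorm A := by
  rw [frobNorm_eq_norm, frobNorm_eq_norm, norm_smul, Real.norm_eq_abs]

lemma frobNorm_transpose (A : Matrix (Fin d) (Fin k) ℝ) : frobNorm Aᵀ = frobNorm A := by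
  simp only [frobNorm_eq_norm, frobenius_norm_transpose]

lemma frobNorm_sub_comm (A B : Matrix (Fin d) (Fin k) ℝ) :
    frobNorm (A - B) = frobNorm (B - A) := by
  simp only [frobNorm_eq_norm, norm_sub_rev]

end Norm

lemma frobNorm_nonneg (A : Matrix (Fin d) (Fin k) ℝ) : 0 ≤ frobNorm A :=
  Real.sqrt_nonneg _

lemma sq_frobNorm (A : Matrix (Fin d) (Fin k) ℝ) : frobNorm A ^ 2 = ∑ j, Aᵀ j ⬝ᵥ Aᵀ j := by
  rw [frobNorm, Real.sq_sqrt (by positivity), Finset.sum_comm]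
  simp [dotProduct, sq]

lemma frobNorm_mul_le_of_mulVec {M : Matrix (Fin p) (Fin d) ℝ} {c : ℝ} (hc : 0 ≤ c)
    (hM : ∀ v, (M *ᵥ v) ⬝ᵥ (M *ᵥ v) ≤ c * (v ⬝ᵥ v)) (A : Matrix (Fin d) (Fin k) ℝ) :
    frobNorm (M * A) ≤ √c * frobNorm A := by
  rw [← Real.sqrt_sq (frobNorm_nonneg _), ← Real.sqrt_sq (frobNorm_nonneg A),
    ← Real.sqrt_mul hc, sq_frobNorm, sq_frobNorm, Finset.mul_sum]
  gcongr with j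
  have hcol : (M * A)ᵀ j = M *ᵥ Aᵀ j := by
    rw [transpose_mul]; exact vecMul_transpose M (Aᵀ j)
  rw [hcol]
  exact hM _

lemma frobNorm_mul_le_of_transpose_mulVec {N : Matrix (Fin d) (Fin p) ℝ} {c : ℝ} (hc : 0 ≤ c)
    (hN : ∀ v, (Nᵀ *ᵥ v) ⬝ᵥ (Nᵀ *ᵥ v) ≤ c * (v ⬝ᵥ v)) (A : Matrix (Fin k) (Fin d) ℝ) :
    frobNorm (A * N) ≤ √c * frobNorm A := by
  simpa only [← transpose_mul, frobNorm_transpose] using frobNorm_mul_le_of_mulVec hc hN Aᵀ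

lemma frobNorm_mul_mul_le {P : Matrix (Fin p) (Fin d) ℝ} {Q : Matrix (Fin k) (Fin q) ℝ}
    {a b : ℝ} (ha : 0 ≤ a) (hb : 0 ≤ b) (hP : ∀ v, (P *ᵥ v) ⬝ᵥ (P *ᵥ v) ≤ a * (v ⬝ᵥ v))
    (hQ : ∀ v, (Qᵀ *ᵥ v) ⬝ᵥ (Qᵀ *ᵥ v) ≤ b * (v ⬝ᵥ v)) (E : Matrix (Fin d) (Fin k) ℝ) :
    frobNorm (P * E * Q) ≤ √a * √b * frobNorm E :=
  calc frobNorm (P * E * Q) ≤ √b * frobNorm (P * E) :=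
        frobNorm_mul_le_of_transpose_mulVec hb hQ _
    _ ≤ √b * (√a * frobNorm E) := by gcongr; exact frobNorm_mul_le_of_mulVec ha hP E
    _ = √a * √b * frobNorm E := by ring

lemma frobNorm_inv_mul_mul_transpose_mul_inv_le {A : Matrix (Fin d) (Fin d) ℝ}
    {A' : Matrix (Fin q) (Fin q) ℝ} {X : Matrix (Fin d) (Fin k) ℝ} {c ε : ℝ} (hε : 0 < ε)
    (hc : 0 ≤ c) (hA : (A - ε • 1).PosSemidef) (hA' : (A' - ε • 1).PosSemidef)
    (hX : (c • A - X * Xᵀ).PosSemidef) (E : Matrix (Fin q) (Fin k) ℝ) :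
    frobNorm (A⁻¹ * X * Eᵀ * A'⁻¹) ≤ √(c / ε ^ 3) * frobNorm E := by
  have hA'inv : ∀ v, (A'⁻¹ᵀ *ᵥ v) ⬝ᵥ (A'⁻¹ᵀ *ᵥ v) ≤ ε⁻¹ / ε * (v ⬝ᵥ v) := by
    simpa only [transpose_inv_of_posSemidef_sub_smul_one hε hA'] using
      dotProduct_inv_mulVec_le hε hA'
  calc frobNorm (A⁻¹ * X * Eᵀ * A'⁻¹) ≤ √(c / ε) * √(ε⁻¹ / ε) * frobNorm Eᵀ :=
        frobNorm_mul_mul_le (by positivity) (by positivity)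
          (dotProduct_inv_mul_mulVec_le hε hc hA hX) hA'inv Eᵀ
    _ = √(c / ε ^ 3) * frobNorm E := by
        rw [← Real.sqrt_mul (by positivity), frobNorm_transpose]
        congr 2
        field_simp

end Frobenius

lemma mul_transpose_sub_mul_transpose {R : Type*} [CommRing R] {m k : Type*} [Fintype k]
    (X Y : Matrix m k R) : Y * Yᵀ - X * Xᵀ = X * (Y - X)ᵀ + (Y - X) * Yᵀ := by
  simp only [transpose_sub, Matrix.mul_sub, Matrix.sub_mul]
  abel

lemma inv_sub_inv_eq_of_sub_eq_smul {R : Type*} [CommRing R] {m k : Type*} [Fintype m]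
    [DecidableEq m] [Fintype k] {A₁ A₂ : Matrix m m R} {X₁ X₂ : Matrix m k R} {c : R}
    (hA₁ : IsUnit A₁) (hA₂ : IsUnit A₂) (h : A₂ - A₁ = c • (X₂ * X₂ᵀ - X₁ * X₁ᵀ)) :
    A₁⁻¹ - A₂⁻¹ = c • (A₁⁻¹ * X₁ * (X₂ - X₁)ᵀ * A₂⁻¹ + A₁⁻¹ * (X₂ - X₁) * X₂ᵀ * A₂⁻¹) := by
  rw [inv_sub_inv (iff_of_true hA₁ hA₂), h, mul_transpose_sub_mul_transpose]
  simp only [Matrix.mul_smul, Matrix.smul_mul, Matrix.mul_add, Matrix.add_mul, Matrix.mul_assoc]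

lemma posSemidef_smul_inv_smul_add_sub {m : Type*} {c : ℝ} (hc : 0 < c) (M : Matrix m m ℝ)
    {D : Matrix m m ℝ} (hD : D.PosSemidef) : (c • (c⁻¹ • M + D) - M).PosSemidef := by
  rw [smul_add, smul_smul, mul_inv_cancel₀ hc.ne', one_smul, add_sub_cancel_left]
  exact hD.smul hc.le

lemma inv_mul_sqrt_div {x y : ℝ} (hx : 0 < x) : x⁻¹ * √(x / y) = 1 / √(x * y) := by
  rw [Real.sqrt_div hx.le, Real.sqrt_mul hx.le]
  field_simp
  rw [Real.sq_sqrt hx.le]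

/-- Local Lipschitz property of the resolvent map: if the smallest eigenvalue of
`C_{X_i} + D` is at least `ε > 0` (expressed as `C_{X_i} + D − ε·I ⪰ 0`), then
`‖(C_{X₁}+D)⁻¹ − (C_{X₂}+D)⁻¹‖_F ≤ (2/√(nε³))·‖X₁ − X₂‖_F`, where `C_X = n⁻¹ X Xᵀ`. -/
theorem resolvent_lipschitz {d n : ℕ} (X₁ X₂ : Matrix (Fin d) (Fin n) ℝ)
    (D : Matrix (Fin d) (Fin d) ℝ) (hD : D.PosSemidef) (ε : ℝ) (hε : 0 < ε)
    (h₁ : (((n : ℝ)⁻¹ • (X₁ * X₁ᵀ) + D) - ε • (1 : Matrix (Fin d) (Fin d) ℝ)).PosSemidef)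
    (h₂ : (((n : ℝ)⁻¹ • (X₂ * X₂ᵀ) + D) - ε • (1 : Matrix (Fin d) (Fin d) ℝ)).PosSemidef) :
    frobNorm (((n : ℝ)⁻¹ • (X₁ * X₁ᵀ) + D)⁻¹ - ((n : ℝ)⁻¹ • (X₂ * X₂ᵀ) + D)⁻¹)
      ≤ (2 / Real.sqrt (n * ε ^ 3)) * frobNorm (X₁ - X₂) := by
  rcases n.eq_zero_or_pos with rfl | hn
  · simp [frobNorm]
  have hn' : (0 : ℝ) < n := Nat.cast_pos.mpr hn
  set A₁ := (n : ℝ)⁻¹ • (X₁ * X₁ᵀ) + D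
  set A₂ := (n : ℝ)⁻¹ • (X₂ * X₂ᵀ) + D
  set E := X₂ - X₁
  have hsplit := inv_sub_inv_eq_of_sub_eq_smul (posDef_of_posSemidef_sub_smul_one hε h₁).isUnit
    (posDef_of_posSemidef_sub_smul_one hε h₂).isUnit (X₁ := X₁) (X₂ := X₂)
    (by simp only [A₁, A₂, smul_sub]; abel)
  have hT₁ : frobNorm (A₁⁻¹ * X₁ * Eᵀ * A₂⁻¹) ≤ √(n / ε ^ 3) * frobNorm E :=
    frobNorm_inv_mul_mul_transpose_mul_inv_le hε hn'.le h₁ h₂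
      (posSemidef_smul_inv_smul_add_sub hn' _ hD) E
  have hT₂ : frobNorm (A₁⁻¹ * E * X₂ᵀ * A₂⁻¹) ≤ √(n / ε ^ 3) * frobNorm E := by
    rw [← frobNorm_transpose]
    simp only [transpose_mul, transpose_transpose, ← Matrix.mul_assoc,
      transpose_inv_of_posSemidef_sub_smul_one hε h₁,
      transpose_inv_of_posSemidef_sub_smul_one hε h₂]
    exact frobNorm_inv_mul_mul_transpose_mul_inv_le hε hn'.le h₂ h₁
      (posSemidef_smul_inv_smul_add_sub hn' _ hD) E
  calc frobNorm (A₁⁻¹ - A₂⁻¹)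
      ≤ (n : ℝ)⁻¹ * (frobNorm (A₁⁻¹ * X₁ * Eᵀ * A₂⁻¹) + frobNorm (A₁⁻¹ * E * X₂ᵀ * A₂⁻¹)) := by
        rw [hsplit, frobNorm_smul, abs_of_pos (inv_pos.mpr hn')]
        gcongr
        exact frobNorm_add_le _ _
    _ ≤ (n : ℝ)⁻¹ * (√(n / ε ^ 3) * frobNorm E + √(n / ε ^ 3) * frobNorm E) := by gcongr
    _ = 2 / √(n * ε ^ 3) * frobNorm (X₁ - X₂) := by
        rw [frobNorm_sub_comm, div_eq_mul_one_div 2, ← inv_mul_sqrt_div hn']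
        ring
end

section
/- Let f : ℝ^{d×d} → ℝ be defined on symmetric matrices, and let b > 1, λ > 0, n, d ∈ ℕ with d < n, and Σ a positive definite d×d matrix. Define f_λ(b) = 1 + n^{−1} tr(Σ (Σ/b + λI)^{−1}). Then f_λ has a unique fixed point b* on [1, ∞), and for λ = 0 (when d < n), the fixed point of f₀(b) = 1 + b·d/n is b* = (1 − d/n)^{−1}. -/
/-!
With `T(c) = tr(Σ (Σ + c I)⁻¹)`, rescaling `Σ/b + λI = b⁻¹ (Σ + λb I)` turns `b = f_λ(b)` into
`b⁻¹ + T(λb)/n = 1`. On `c ≥ 0`, `T` is continuous and nonincreasing with `0 ≤ T ≤ T(0) = d < n`,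
so the left side is strictly decreasing in `b`, at least `1` at `b = 1` and at most `1` at
`b = (1 - d/n)⁻¹`; the intermediate value theorem gives the unique root, and for `λ = 0` the
equation reads `b⁻¹ + d/n = 1`.
-/

open Matrix Set

namespace Matrix

variable {m : Type*} [DecidableEq m] {A : Matrix m m ℝ}

theorem PosDef.add_smul_one (hA : A.PosDef) {c : ℝ} (hc : 0 ≤ c) : (A + c • 1).PosDef :=
  hA.add_posSemidef (PosSemidef.one.smul hc)

variable [Fintype m]

open scoped MatrixOrder in
theorem PosSemidef.trace_mul_nonneg {B : Matrix m m ℝ} (hA : A.PosSemidef)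
    (hB : B.PosSemidef) : 0 ≤ (A * B).trace := by
  have hconj : (CFC.sqrt A * B * CFC.sqrt A).PosSemidef := by
    have h := hB.conjTranspose_mul_mul_same (CFC.sqrt A)
    rwa [(CFC.sqrt_nonneg A).posSemidef.1.eq] at h
  calc 0 ≤ (CFC.sqrt A * B * CFC.sqrt A).trace := hconj.trace_nonneg
    _ = (A * B).trace := by rw [trace_mul_cycle, CFC.sqrt_mul_sqrt_self A hA.nonneg]

theorem PosDef.isUnit_det_add_smul_one (hA : A.PosDef) {c : ℝ} (hc : 0 ≤ c) :
    IsUnit (A + c • 1).det :=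
  (hA.add_smul_one hc).det_pos.ne'.isUnit

noncomputable def effectiveDim (A : Matrix m m ℝ) (c : ℝ) : ℝ :=
  (A * (A + c • 1)⁻¹).trace

theorem effectiveDim_zero (hA : IsUnit A.det) : A.effectiveDim 0 = Fintype.card m := by
  simp [effectiveDim, mul_nonsing_inv A hA]

theorem PosDef.effectiveDim_nonneg (hA : A.PosDef) {c : ℝ} (hc : 0 ≤ c) :
    0 ≤ A.effectiveDim c :=
  hA.posSemidef.trace_mul_nonneg (hA.add_smul_one hc).inv.posSemidef

/-- By the resolvent identity `P⁻¹ - Q⁻¹ = (c₂ - c₁) (Q P)⁻¹` the difference is the trace of a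
product of positive semidefinite matrices, `Q P` being a polynomial in `A` with nonnegative
coefficients. -/
theorem PosDef.effectiveDim_antitoneOn (hA : A.PosDef) : AntitoneOn A.effectiveDim (Ici 0) := by
  intro c₁ (hc₁ : 0 ≤ c₁) c₂ (hc₂ : 0 ≤ c₂) hc
  set P := A + c₁ • (1 : Matrix m m ℝ)
  set Q := A + c₂ • (1 : Matrix m m ℝ)
  have hresolvent : P⁻¹ - Q⁻¹ = (c₂ - c₁) • (Q * P)⁻¹ := by
    have hPQ : Q - P = (c₂ - c₁) • (1 : Matrix m m ℝ) := by simp only [P, Q, sub_smul]; abel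
    calc P⁻¹ - Q⁻¹ = P⁻¹ * (Q - P) * Q⁻¹ := by
          rw [mul_sub, sub_mul, mul_assoc, mul_nonsing_inv _ (hA.isUnit_det_add_smul_one hc₂),
            mul_one, nonsing_inv_mul _ (hA.isUnit_det_add_smul_one hc₁), one_mul]
      _ = (c₂ - c₁) • (Q * P)⁻¹ := by
          rw [hPQ, mul_inv_rev, mul_smul_comm, mul_one, smul_mul_assoc]
  have hQP : (Q * P).PosSemidef := by
    have hexpand : Q * P = Aᴴ * A + (c₁ • A + (c₂ • A + (c₁ * c₂) • (1 : Matrix m m ℝ))) := by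
      simp only [P, Q, hA.1.eq, add_mul, mul_add, smul_add, smul_mul_assoc, mul_smul_comm,
        smul_smul, mul_one, one_mul]
      abel
    rw [hexpand]
    exact (posSemidef_conjTranspose_mul_self A).add ((hA.posSemidef.smul hc₁).add
      ((hA.posSemidef.smul hc₂).add (PosSemidef.one.smul (mul_nonneg hc₁ hc₂))))
  have hdiff : 0 ≤ A.effectiveDim c₁ - A.effectiveDim c₂ := by
    rw [effectiveDim, effectiveDim, ← trace_sub, ← mul_sub, hresolvent]
    exact hA.posSemidef.trace_mul_nonneg (hQP.inv.smul (sub_nonneg.2 hc))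
  linarith

theorem PosDef.effectiveDim_le_card (hA : A.PosDef) {c : ℝ} (hc : 0 ≤ c) :
    A.effectiveDim c ≤ Fintype.card m :=
  effectiveDim_zero hA.det_pos.ne'.isUnit ▸ hA.effectiveDim_antitoneOn self_mem_Ici hc hc

theorem PosDef.continuousOn_effectiveDim (hA : A.PosDef) :
    ContinuousOn A.effectiveDim (Ici 0) := by
  have hinv : ContinuousOn (fun c : ℝ => (A + c • 1)⁻¹) (Ici 0) := fun c hc =>
    (continuousAt_matrix_inv _ (by
      simpa only [Ring.inverse_eq_inv'] using
        continuousAt_inv₀ (hA.add_smul_one hc).det_pos.ne')).comp_continuousWithinAt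
      (by fun_prop)
  exact (continuous_const.matrix_mul continuous_id).matrix_trace.comp_continuousOn hinv

theorem PosDef.one_add_mul_trace_mul_inv_eq_iff (hA : A.PosDef) {l b : ℝ} (hl : 0 ≤ l)
    (hb : 0 < b) (x : ℝ) :
    1 + x * (A * (b⁻¹ • A + l • 1)⁻¹).trace = b ↔ b⁻¹ + x * A.effectiveDim (l * b) = 1 := by
  have hrescale : b⁻¹ • A + l • (1 : Matrix m m ℝ) = b⁻¹ • (A + (l * b) • 1) := by
    rw [smul_add, smul_smul, mul_comm l b, inv_mul_cancel_left₀ hb.ne']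
  let := invertibleOfNonzero (inv_ne_zero hb.ne')
  rw [hrescale, inv_smul _ b⁻¹ (hA.isUnit_det_add_smul_one (mul_nonneg hl hb.le)), invOf_eq_inv,
    inv_inv, mul_smul_comm, trace_smul, smul_eq_mul, ← effectiveDim]
  constructor <;> intro h <;> field_simp at h ⊢ <;> linarith

end Matrix

theorem existsUnique_inv_add_eq_one {g : ℝ → ℝ} {κ : ℝ} (hκ : κ < 1)
    (hcont : ContinuousOn g (Ici 1)) (hanti : AntitoneOn g (Ici 1)) (hg₁ : 0 ≤ g 1)
    (hle : ∀ b ∈ Ici (1 : ℝ), g b ≤ κ) :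
    ∃! b, b ∈ Ici (1 : ℝ) ∧ b⁻¹ + g b = 1 := by
  have hF : StrictAntiOn (fun b => b⁻¹ + g b) (Ici 1) := fun b₁ h₁ b₂ h₂ hlt =>
    add_lt_add_of_lt_of_le (inv_strictAnti₀ (zero_lt_one.trans_le h₁) hlt) (hanti h₁ h₂ hlt.le)
  set B := (1 - κ)⁻¹
  have hB : 1 ≤ B := one_le_inv₀ (by linarith) |>.2 (by linarith [hle 1 self_mem_Ici])
  have hcont' : ContinuousOn (fun b => b⁻¹ + g b) (Icc 1 B) :=
    ((continuousOn_inv₀.mono fun b (hb : 1 ≤ b) => (zero_lt_one.trans_le hb).ne').add hcont).mono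
      Icc_subset_Ici_self
  have hmem : (1 : ℝ) ∈ Icc (B⁻¹ + g B) (1⁻¹ + g 1) := by
    constructor
    · linarith [inv_inv (1 - κ), hle B hB]
    · linarith [(inv_one : (1 : ℝ)⁻¹ = 1)]
  obtain ⟨b, hb, hroot⟩ := intermediate_value_Icc' hB hcont' hmem
  exact ⟨b, ⟨hb.1, hroot⟩, fun b' ⟨hb', hroot'⟩ => hF.injOn hb' hb.1 (hroot'.trans hroot.symm)⟩

/-- The self-consistent equation `b = f_λ(b) = 1 + n⁻¹ tr(Σ(Σ/b + λI)⁻¹)` has a unique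
solution on `[1, ∞)`, and for `λ = 0` (with `d < n`) the fixed point is `(1 − d/n)⁻¹`. -/
theorem fixed_point_self_consistent {d n : ℕ} (hdn : d < n)
    (Sg : Matrix (Fin d) (Fin d) ℝ) (hSg : Sg.PosDef) (lam : ℝ) (hlam : 0 ≤ lam) :
    (∃! b : ℝ, b ∈ Set.Ici (1 : ℝ) ∧
        1 + (n : ℝ)⁻¹ *
            Matrix.trace (Sg * (b⁻¹ • Sg + lam • (1 : Matrix (Fin d) (Fin d) ℝ))⁻¹) = b) ∧
      (∀ b : ℝ, 1 ≤ b →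
        (1 + (n : ℝ)⁻¹ *
            Matrix.trace (Sg * (b⁻¹ • Sg + (0 : ℝ) • (1 : Matrix (Fin d) (Fin d) ℝ))⁻¹) = b
          ↔ b = (1 - (d : ℝ) / n)⁻¹)) := by
  have hn : (0 : ℝ) < n := by exact_mod_cast (Nat.zero_le d).trans_lt hdn
  have hκ : (d : ℝ) / n < 1 := (div_lt_one hn).2 (by exact_mod_cast hdn)
  have hscale : MapsTo (lam * ·) (Ici (1 : ℝ)) (Ici 0) := fun b (hb : 1 ≤ b) =>
    mul_nonneg hlam (zero_le_one.trans hb)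
  constructor
  · have hroot := existsUnique_inv_add_eq_one (g := fun b => (n : ℝ)⁻¹ * Sg.effectiveDim (lam * b))
      hκ (continuousOn_const.mul (hSg.continuousOn_effectiveDim.comp (by fun_prop) hscale))
      (fun b₁ h₁ b₂ h₂ h => mul_le_mul_of_nonneg_left
        (hSg.effectiveDim_antitoneOn (hscale h₁) (hscale h₂)
          (mul_le_mul_of_nonneg_left h hlam)) (by positivity))
      (by have := hSg.effectiveDim_nonneg (hscale self_mem_Ici); positivity)
      (fun b hb => by
        rw [inv_mul_eq_div]
        gcongr
        simpa using hSg.effectiveDim_le_card (hscale hb))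
    refine (existsUnique_congr fun b => and_congr_right fun hb => ?_).2 hroot
    exact hSg.one_add_mul_trace_mul_inv_eq_iff hlam (zero_lt_one.trans_le hb) _
  · intro b hb
    rw [hSg.one_add_mul_trace_mul_inv_eq_iff le_rfl (zero_lt_one.trans_le hb), zero_mul,
      effectiveDim_zero hSg.det_pos.ne'.isUnit, Fintype.card_fin, ← inv_eq_iff_eq_inv,
      inv_mul_eq_div]
    constructor <;> intro h <;> linarith
end

section
/- Let Σ be a positive definite d×d matrix, λ > 0, n ∈ ℕ, and define f_λ(b) = 1 + n^{−1} tr(Σ (Σ/b + λI)^{−1}) for b ≥ 1. If b* is a fixed point of f_λ on [1, ∞), then f_λ is a contraction near b*: for all b ≥ 1, |f_λ(b) − f_λ(b*)| ≤ ((b* − 1)/b*)·|b − b*|. -/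
open Matrix

lemma trace_resolvent_eq {d : ℕ} (Sg : Matrix (Fin d) (Fin d) ℝ) (hSg : Sg.PosDef)
    (lam : ℝ) (hlam : 0 < lam) (c : ℝ) (hc : 0 < c) :
    Matrix.trace (Sg * (c⁻¹ • Sg + lam • (1 : Matrix (Fin d) (Fin d) ℝ))⁻¹)
      = ∑ i, hSg.1.eigenvalues i * (c⁻¹ * hSg.1.eigenvalues i + lam)⁻¹ := by
  classical
  set μ := hSg.1.eigenvalues with hμdef
  set U : Matrix (Fin d) (Fin d) ℝ := (hSg.1.eigenvectorUnitary : Matrix (Fin d) (Fin d) ℝ)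
    with hUdef
  have hUU : U * star U = 1 := (Matrix.mem_unitaryGroup_iff).mp hSg.1.eigenvectorUnitary.2
  have hUU' : star U * U = 1 := (Matrix.mem_unitaryGroup_iff').mp hSg.1.eigenvectorUnitary.2
  have hspec : Sg = U * diagonal μ * star U := by simpa using hSg.1.spectral_theorem
  have hden : ∀ i, c⁻¹ * μ i + lam ≠ 0 := fun i =>
    (add_pos_of_nonneg_of_pos (mul_nonneg (inv_nonneg.2 hc.le) (hSg.eigenvalues_pos i).le)
      hlam).ne'
  have hM : c⁻¹ • Sg + lam • (1 : Matrix (Fin d) (Fin d) ℝ)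
      = U * diagonal (fun i => c⁻¹ * μ i + lam) * star U := by
    rw [hspec]
    have h1 : (lam • (1 : Matrix (Fin d) (Fin d) ℝ)) = U * diagonal (fun _ => lam) * star U := by
      rw [show (diagonal (fun _ : Fin d => lam)) = lam • (1 : Matrix (Fin d) (Fin d) ℝ) by
        ext i j; by_cases h : i = j <;> simp [diagonal, Matrix.one_apply, h]]
      rw [Matrix.mul_smul, Matrix.smul_mul, mul_one, hUU]
    rw [h1, ← Matrix.smul_mul, ← Matrix.mul_smul, ← Matrix.add_mul, ← Matrix.mul_add]
    congr 1
    rw [show c⁻¹ • diagonal μ = diagonal (fun i => c⁻¹ * μ i) from (diagonal_smul c⁻¹ μ).symm ▸ rfl,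
      ← diagonal_add]
  have hMinv : (c⁻¹ • Sg + lam • (1 : Matrix (Fin d) (Fin d) ℝ))⁻¹
      = U * diagonal (fun i => (c⁻¹ * μ i + lam)⁻¹) * star U := by
    rw [hM]
    apply Matrix.inv_eq_right_inv
    calc U * diagonal (fun i => c⁻¹ * μ i + lam) * star U *
          (U * diagonal (fun i => (c⁻¹ * μ i + lam)⁻¹) * star U)
        = U * (diagonal (fun i => c⁻¹ * μ i + lam) * (star U * U) *
            diagonal (fun i => (c⁻¹ * μ i + lam)⁻¹)) * star U := by
          simp only [Matrix.mul_assoc]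
      _ = 1 := by
          rw [hUU', mul_one, diagonal_mul_diagonal]
          simp only [mul_inv_cancel₀ (hden _)]
          rw [diagonal_one, mul_one, hUU]
  rw [hMinv, hspec]
  have : U * diagonal μ * star U * (U * diagonal (fun i => (c⁻¹ * μ i + lam)⁻¹) * star U)
      = U * (diagonal μ * diagonal (fun i => (c⁻¹ * μ i + lam)⁻¹)) * star U := by
    calc U * diagonal μ * star U * (U * diagonal (fun i => (c⁻¹ * μ i + lam)⁻¹) * star U)
        = U * (diagonal μ * ((star U * U) * (diagonal (fun i => (c⁻¹ * μ i + lam)⁻¹) * star U))) := by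
          simp only [Matrix.mul_assoc]
      _ = _ := by rw [hUU', one_mul]; simp only [Matrix.mul_assoc]
  rw [this, Matrix.trace_mul_cycle, ← Matrix.mul_assoc, hUU', one_mul,
    diagonal_mul_diagonal, trace_diagonal]

/-- Contraction property of `f_λ(b) = 1 + n⁻¹ tr(Σ(Σ/b + λI)⁻¹)` around its fixed point
`b*` on `[1, ∞)`: `|f_λ(b) − f_λ(b*)| ≤ ((b* − 1)/b*)·|b − b*|`. -/
theorem fixed_point_contraction {d n : ℕ} (hn : 0 < n)
    (Sg : Matrix (Fin d) (Fin d) ℝ) (hSg : Sg.PosDef) (lam : ℝ) (hlam : 0 < lam)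
    (bstar : ℝ) (hbstar : 1 ≤ bstar)
    (hfix : 1 + (n : ℝ)⁻¹ *
        Matrix.trace (Sg * (bstar⁻¹ • Sg + lam • (1 : Matrix (Fin d) (Fin d) ℝ))⁻¹) = bstar) :
    ∀ b : ℝ, 1 ≤ b →
      |(1 + (n : ℝ)⁻¹ *
          Matrix.trace (Sg * (b⁻¹ • Sg + lam • (1 : Matrix (Fin d) (Fin d) ℝ))⁻¹)) -
        (1 + (n : ℝ)⁻¹ *
          Matrix.trace (Sg * (bstar⁻¹ • Sg + lam • (1 : Matrix (Fin d) (Fin d) ℝ))⁻¹))|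
        ≤ ((bstar - 1) / bstar) * |b - bstar| := by
  intro b hb
  have hbpos : (0:ℝ) < b := lt_of_lt_of_le one_pos hb
  have hspos : (0:ℝ) < bstar := lt_of_lt_of_le one_pos hbstar
  set μ := hSg.1.eigenvalues with hμdef
  have hμpos : ∀ i, 0 < μ i := fun i => hSg.eigenvalues_pos i
  rw [trace_resolvent_eq Sg hSg lam hlam b hbpos,
      trace_resolvent_eq Sg hSg lam hlam bstar hspos] at *
  set x : Fin d → ℝ := fun i => b⁻¹ * μ i + lam with hx
  set y : Fin d → ℝ := fun i => bstar⁻¹ * μ i + lam with hy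
  have hxpos : ∀ i, 0 < x i := fun i =>
    add_pos_of_nonneg_of_pos (mul_nonneg (inv_nonneg.2 hbpos.le) (hμpos i).le) hlam
  have hypos : ∀ i, 0 < y i := fun i =>
    add_pos_of_nonneg_of_pos (mul_nonneg (inv_nonneg.2 hspos.le) (hμpos i).le) hlam
  set G : ℝ := ∑ i, μ i * (y i)⁻¹ with hG
  set Gb : ℝ := ∑ i, μ i * (x i)⁻¹ with hGb
  set S : ℝ := ∑ i, μ i ^ 2 * ((x i) * (y i))⁻¹ with hS
  have hSnonneg : 0 ≤ S := Finset.sum_nonneg fun i _ =>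
    mul_nonneg (sq_nonneg _) (inv_nonneg.2 (mul_pos (hxpos i) (hypos i)).le)
  -- identity: Gb - G = (bstar⁻¹ - b⁻¹) * S
  have hdiff : Gb - G = (bstar⁻¹ - b⁻¹) * S := by
    rw [hGb, hG, hS, ← Finset.sum_sub_distrib, Finset.mul_sum]
    refine Finset.sum_congr rfl fun i _ => ?_
    have hxne := (hxpos i).ne'
    have hyne := (hypos i).ne'
    have hyx : (bstar⁻¹ - b⁻¹) * μ i = y i - x i := by simp only [hx, hy]; ring
    rw [show (bstar⁻¹ - b⁻¹) * (μ i ^ 2 * (x i * y i)⁻¹)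
        = ((bstar⁻¹ - b⁻¹) * μ i) * (μ i * (x i * y i)⁻¹) by ring, hyx]
    field_simp
  -- bound: S ≤ b * G
  have hSle : S ≤ b * G := by
    rw [hS, hG, Finset.mul_sum]
    refine Finset.sum_le_sum fun i _ => ?_
    have h1 : μ i ^ 2 * ((x i) * (y i))⁻¹ = (μ i * (x i)⁻¹) * (μ i * (y i)⁻¹) := by
      rw [mul_inv]; ring
    rw [h1]
    have h2 : μ i * (x i)⁻¹ ≤ b := by
      rw [mul_inv_le_iff₀ (hxpos i)]
      have : b * x i = μ i + b * lam := by
        simp only [hx]; field_simp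
      rw [this]
      nlinarith [mul_pos hbpos hlam]
    exact mul_le_mul_of_nonneg_right h2 (mul_nonneg (hμpos i).le (inv_nonneg.2 (hypos i).le))
  -- fixed point: G = n * (bstar - 1)
  have hnne : (n:ℝ) ≠ 0 := Nat.cast_ne_zero.2 hn.ne'
  have hGeq : G = (n:ℝ) * (bstar - 1) := by
    have h1 : (n:ℝ)⁻¹ * G = bstar - 1 := by linarith
    calc G = (n:ℝ) * ((n:ℝ)⁻¹ * G) := by field_simp
      _ = (n:ℝ) * (bstar - 1) := by rw [h1]
  -- main computation
  have habs : |bstar⁻¹ - b⁻¹| = |b - bstar| * (b * bstar)⁻¹ := by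
    rw [show bstar⁻¹ - b⁻¹ = (b - bstar) * (b * bstar)⁻¹ by
      rw [mul_inv, sub_mul, ← mul_assoc, mul_inv_cancel₀ hbpos.ne', one_mul,
        mul_comm b⁻¹ bstar⁻¹, ← mul_assoc, mul_inv_cancel₀ hspos.ne', one_mul]]
    rw [abs_mul, abs_of_pos (inv_pos.2 (mul_pos hbpos hspos))]
  calc |(1 + (n:ℝ)⁻¹ * Gb) - (1 + (n:ℝ)⁻¹ * G)| = (n:ℝ)⁻¹ * |Gb - G| := by
        rw [show (1 + (n:ℝ)⁻¹ * Gb) - (1 + (n:ℝ)⁻¹ * G) = (n:ℝ)⁻¹ * (Gb - G) by ring,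
          abs_mul, abs_of_nonneg (inv_nonneg.2 (Nat.cast_nonneg n))]
    _ = (n:ℝ)⁻¹ * (|b - bstar| * (b * bstar)⁻¹ * S) := by
        rw [hdiff, abs_mul, abs_of_nonneg hSnonneg, habs]
    _ ≤ (n:ℝ)⁻¹ * (|b - bstar| * (b * bstar)⁻¹ * (b * ((n:ℝ) * (bstar - 1)))) := by
        apply mul_le_mul_of_nonneg_left _ (inv_nonneg.2 (Nat.cast_nonneg n))
        apply mul_le_mul_of_nonneg_left _
          (mul_nonneg (abs_nonneg _) (inv_nonneg.2 (mul_pos hbpos hspos).le))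
        rw [← hGeq]; exact hSle
    _ = ((n:ℝ)⁻¹ * n) * (b⁻¹ * b) * ((bstar - 1) * bstar⁻¹ * |b - bstar|) := by
        rw [mul_inv]; ring
    _ = ((bstar - 1) / bstar) * |b - bstar| := by
        rw [inv_mul_cancel₀ hnne, inv_mul_cancel₀ hbpos.ne', div_eq_mul_inv]; ring
end

section
/- Let μ₁ and μ₂ be centered Gaussian measures on ℝ^d with covariance matrices A and B respectively. Then W₂(μ₁, μ₂) ≤ ‖A^{1/2} − B^{1/2}‖_F, where A^{1/2}, B^{1/2} are the positive semidefinite square roots. -/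
open Matrix MeasureTheory ProbabilityTheory

/-- Euclidean norm on `ℝ^d`. -/
noncomputable def euclNorm {d : ℕ} (x : Fin d → ℝ) : ℝ := Real.sqrt (∑ i, x i ^ 2)

/-- `γ` is a coupling of `μ` and `ν`. -/
def IsCoupling {α : Type*} [MeasurableSpace α] (γ : Measure (α × α)) (μ ν : Measure α) : Prop :=
  γ.map Prod.fst = μ ∧ γ.map Prod.snd = ν

/-- 2-Wasserstein distance on `ℝ^d` with Euclidean cost. -/
noncomputable def W2 {d : ℕ} (μ ν : Measure (Fin d → ℝ)) : ℝ :=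
  ⨅ γ : {γ : Measure ((Fin d → ℝ) × (Fin d → ℝ)) // IsCoupling γ μ ν},
    Real.sqrt (∫ p, euclNorm (p.1 - p.2) ^ 2 ∂(γ.1))

/-- The positive semidefinite square root of a positive semidefinite matrix
(Mathlib's former `Matrix.PosSemidef.sqrt`, removed upstream; restated with its old definition). -/
noncomputable def Matrix.PosSemidef.sqrt {n : Type*} [Fintype n] [DecidableEq n]
    {A : Matrix n n ℝ} (hA : A.PosSemidef) : Matrix n n ℝ :=
  hA.1.eigenvectorUnitary.1 * diagonal ((↑) ∘ (Real.sqrt ·) ∘ hA.1.eigenvalues) *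
    (star hA.1.eigenvectorUnitary : Matrix n n ℝ)

/-- The centered Gaussian measure on `ℝ^d` with covariance `A`, realized as the
pushforward of the standard Gaussian by `z ↦ A^{1/2} z`. -/
noncomputable def gaussianOf {d : ℕ} (A : Matrix (Fin d) (Fin d) ℝ) (hA : A.PosSemidef) :
    Measure (Fin d → ℝ) :=
  (Measure.pi fun _ : Fin d => gaussianReal 0 1).map (fun z => hA.sqrt.mulVec z)

/-!
Couple the two Gaussians through one standard Gaussian vector `z`, as `(A^{1/2} z, B^{1/2} z)`.
The cost of this coupling is `E ‖M z‖²` with `M = A^{1/2} - B^{1/2}`, and summing over the rows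
`Mᵢ` gives `E ‖M z‖² = ∑ᵢ E ⟪Mᵢ, z⟫² = ∑ᵢ ‖Mᵢ‖² = ‖M‖_F²`, because `⟪v, z⟫` is a centered
real Gaussian of variance `‖v‖²`.
-/

open scoped RealInnerProductSpace

section StdGaussian

variable {E : Type*} [NormedAddCommGroup E] [InnerProductSpace ℝ E] [FiniteDimensional ℝ E]
  [MeasurableSpace E] [BorelSpace E]

lemma integrable_inner_sq_stdGaussian (v : E) :
    Integrable (fun x => ⟪v, x⟫ ^ 2) (stdGaussian E) :=
  (IsGaussian.memLp_dual _ (innerSL ℝ v) 2 (by simp)).integrable_sq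

lemma integral_inner_sq_stdGaussian (v : E) :
    ∫ x, ⟪v, x⟫ ^ 2 ∂stdGaussian E = ‖v‖ ^ 2 := by
  have h := variance_dual_stdGaussian (innerSL ℝ v)
  rwa [variance_of_integral_eq_zero (by fun_prop) (integral_strongDual_stdGaussian _),
    innerSL_apply_norm] at h

end StdGaussian

section PiGaussian

variable {ι : Type*} [Fintype ι]

lemma dotProduct_eq_inner_toLp (a z : ι → ℝ) :
    a ⬝ᵥ z = ⟪WithLp.toLp 2 a, WithLp.toLp 2 z⟫ := by
  simp [EuclideanSpace.inner_eq_star_dotProduct, dotProduct_comm]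

lemma integral_pi_gaussianReal_eq_stdGaussian (f : EuclideanSpace ℝ ι → ℝ) :
    ∫ z, f (WithLp.toLp 2 z) ∂(Measure.pi fun _ : ι => gaussianReal 0 1) =
      ∫ x, f x ∂stdGaussian (EuclideanSpace ℝ ι) := by
  rw [← map_pi_eq_stdGaussian, ← MeasurableEquiv.coe_toLp, integral_map_equiv]

lemma integrable_pi_gaussianReal_iff_stdGaussian (f : EuclideanSpace ℝ ι → ℝ) :
    Integrable (fun z => f (WithLp.toLp 2 z)) (Measure.pi fun _ : ι => gaussianReal 0 1) ↔
      Integrable f (stdGaussian (EuclideanSpace ℝ ι)) := by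
  rw [← map_pi_eq_stdGaussian, ← MeasurableEquiv.coe_toLp, integrable_map_equiv]
  rfl

lemma integrable_dotProduct_sq_pi_gaussianReal (a : ι → ℝ) :
    Integrable (fun z => (a ⬝ᵥ z) ^ 2) (Measure.pi fun _ : ι => gaussianReal 0 1) := by
  simp_rw [dotProduct_eq_inner_toLp a]
  exact (integrable_pi_gaussianReal_iff_stdGaussian (fun x => ⟪WithLp.toLp 2 a, x⟫ ^ 2)).2
    (integrable_inner_sq_stdGaussian _)

lemma integral_dotProduct_sq_pi_gaussianReal (a : ι → ℝ) :
    ∫ z, (a ⬝ᵥ z) ^ 2 ∂(Measure.pi fun _ : ι => gaussianReal 0 1) = ∑ i, a i ^ 2 := by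
  simp_rw [dotProduct_eq_inner_toLp a]
  rw [integral_pi_gaussianReal_eq_stdGaussian (fun x => ⟪WithLp.toLp 2 a, x⟫ ^ 2),
    integral_inner_sq_stdGaussian, EuclideanSpace.real_norm_sq_eq]

end PiGaussian

lemma euclNorm_sq {d : ℕ} (x : Fin d → ℝ) : euclNorm x ^ 2 = ∑ i, x i ^ 2 :=
  Real.sq_sqrt (Finset.sum_nonneg fun _ _ => sq_nonneg _)

lemma frobNorm_nonneg_s11 {m n : ℕ} (M : Matrix (Fin m) (Fin n) ℝ) : 0 ≤ frobNorm M :=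
  Real.sqrt_nonneg _

lemma frobNorm_sq {m n : ℕ} (M : Matrix (Fin m) (Fin n) ℝ) :
    frobNorm M ^ 2 = ∑ i, ∑ j, M i j ^ 2 :=
  Real.sq_sqrt (Finset.sum_nonneg fun _ _ => Finset.sum_nonneg fun _ _ => sq_nonneg _)

lemma integral_euclNorm_mulVec_sq_pi_gaussianReal {m n : ℕ} (M : Matrix (Fin m) (Fin n) ℝ) :
    ∫ z, euclNorm (M *ᵥ z) ^ 2 ∂(Measure.pi fun _ : Fin n => gaussianReal 0 1) =
      frobNorm M ^ 2 := by
  simp_rw [euclNorm_sq, frobNorm_sq, mulVec]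
  rw [integral_finsetSum _ fun i _ => integrable_dotProduct_sq_pi_gaussianReal (M i)]
  simp_rw [integral_dotProduct_sq_pi_gaussianReal]

lemma IsCoupling.map_prodMk {α β : Type*} [MeasurableSpace α] [MeasurableSpace β]
    (ρ : Measure β) {f g : β → α} (hf : Measurable f) (hg : Measurable g) :
    IsCoupling (ρ.map fun z => (f z, g z)) (ρ.map f) (ρ.map g) := by
  constructor <;> rw [Measure.map_map (by fun_prop) (hf.prodMk hg)] <;> rfl

lemma W2_le_of_isCoupling {d : ℕ} {μ ν : Measure (Fin d → ℝ)}
    {γ : Measure ((Fin d → ℝ) × (Fin d → ℝ))} (hγ : IsCoupling γ μ ν) :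
    W2 μ ν ≤ Real.sqrt (∫ p, euclNorm (p.1 - p.2) ^ 2 ∂γ) := by
  refine ciInf_le ⟨0, ?_⟩ (⟨γ, hγ⟩ : {γ // IsCoupling γ μ ν})
  rintro _ ⟨γ', rfl⟩
  exact Real.sqrt_nonneg _

/-- For centered Gaussians with covariances `A`, `B`:
`W₂(N(0,A), N(0,B)) ≤ ‖A^{1/2} − B^{1/2}‖_F`. -/
theorem gaussian_W2_bound {d : ℕ} (A B : Matrix (Fin d) (Fin d) ℝ)
    (hA : A.PosSemidef) (hB : B.PosSemidef) :
    W2 (gaussianOf A hA) (gaussianOf B hB) ≤ frobNorm (hA.sqrt - hB.sqrt) := by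
  set ρ := Measure.pi fun _ : Fin d => gaussianReal 0 1
  have hmeas : ∀ M : Matrix (Fin d) (Fin d) ℝ, Measurable (M *ᵥ ·) := fun M =>
    (continuous_const.matrix_mulVec continuous_id).measurable
  have hcost : Measurable fun p : (Fin d → ℝ) × (Fin d → ℝ) => euclNorm (p.1 - p.2) ^ 2 := by
    unfold euclNorm; fun_prop
  calc W2 (gaussianOf A hA) (gaussianOf B hB)
      ≤ Real.sqrt (∫ p, euclNorm (p.1 - p.2) ^ 2
          ∂(ρ.map fun z => (hA.sqrt *ᵥ z, hB.sqrt *ᵥ z))) :=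
        W2_le_of_isCoupling (IsCoupling.map_prodMk ρ (hmeas _) (hmeas _))
    _ = Real.sqrt (∫ z, euclNorm ((hA.sqrt - hB.sqrt) *ᵥ z) ^ 2 ∂ρ) := by
        rw [integral_map ((hmeas _).prodMk (hmeas _)).aemeasurable
          hcost.aestronglyMeasurable]
        simp_rw [sub_mulVec]
    _ = frobNorm (hA.sqrt - hB.sqrt) := by
        rw [integral_euclNorm_mulVec_sq_pi_gaussianReal, Real.sqrt_sq (frobNorm_nonneg_s11 _)]
end
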